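/- Let k be a field, H a bialgebra over k, n ≥ 1, and a_1, …, a_n ∈ Prim(H) primitive elements. Then δ^n(a_1 a_2 ⋯ a_n) = Σ_{σ ∈ S_n} a_{σ(1)} ⊗ a_{σ(2)} ⊗ ⋯ ⊗ a_{σ(n)}, the sum over all permutations σ of {1,…,n}. -/

import Mathlib

open TensorProduct

noncomputable section

universe u

variable (R : Type u) [CommRing R]

/-- `Tpow R H n` is the `n`-th tensor power `H^{⊗n}` of the `R`-module `H`,
defined recursively by `H^{⊗0} = R` and `H^{⊗(n+1)} = H ⊗ H^{⊗n}`. -/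
def Tpow (H : Type u) [AddCommGroup H] [Module R H] : ℕ → ModuleCat.{u} R
  | 0 => ModuleCat.of R R
  | n + 1 => ModuleCat.of R (H ⊗[R] (Tpow H n))

variable {R}
variable {H : Type u} [AddCommGroup H] [Module R H]

/-- The iterated comultiplication `Δ^{(n)} : H → H^{⊗n}`:
`Δ^{(0)} = ε`, `Δ^{(1)} = id` (as the canonical map `H ≅ H ⊗ R`), and
`Δ^{(n+1)} = (Δ ⊗ id^{⊗(n−1)}) ∘ Δ^{(n)}`. -/
def iterComul (Δc : H →ₗ[R] H ⊗[R] H) (εc : H →ₗ[R] R) : (n : ℕ) → (H →ₗ[R] Tpow R H n)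
  | 0 => εc
  | 1 => (TensorProduct.rid R H).symm.toLinearMap
  | n + 2 =>
      (TensorProduct.assoc R H H (Tpow R H n)).toLinearMap
        ∘ₗ (LinearMap.rTensor (Tpow R H n) Δc)
        ∘ₗ (iterComul Δc εc (n + 1))

/-- The `n`-fold tensor power `e^{⊗n} : H^{⊗n} → H^{⊗n}` of a linear endomorphism `e`. -/
def mapPow (e : H →ₗ[R] H) : (n : ℕ) → (Tpow R H n →ₗ[R] Tpow R H n)
  | 0 => LinearMap.id
  | n + 1 => TensorProduct.map e (mapPow e n)

/-- `e_H := id − η ∘ ε`, where `η : R → H` is the coaugmentation `r ↦ r • u` sending `1` to `u`. -/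
def eAug (εc : H →ₗ[R] R) (u : H) : H →ₗ[R] H :=
  LinearMap.id - (LinearMap.toSpanSingleton R H u) ∘ₗ εc

/-- `δ^n := e_H^{⊗n} ∘ Δ^{(n)} : H → H^{⊗n}`. -/
def deltaPow (Δc : H →ₗ[R] H ⊗[R] H) (εc : H →ₗ[R] R) (u : H) (n : ℕ) :
    H →ₗ[R] Tpow R H n :=
  (mapPow (eAug εc u) n) ∘ₗ (iterComul Δc εc n)

/-- The `n`-th term `P_n(H) := ker (δ^{n+1})` of the coradical filtration. -/
def corad (Δc : H →ₗ[R] H ⊗[R] H) (εc : H →ₗ[R] R) (u : H) (n : ℕ) : Submodule R H :=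
  LinearMap.ker (deltaPow Δc εc u (n + 1))

/-- The elementary tensor `v 0 ⊗ v 1 ⊗ ⋯ ⊗ v (n-1) ∈ H^{⊗n}`. -/
def mkTensor {R : Type u} [CommRing R] {H : Type u} [AddCommGroup H] [Module R H] :
    (n : ℕ) → (Fin n → H) → Tpow R H n
  | 0, _ => (1 : R)
  | n + 1, v => v 0 ⊗ₜ[R] mkTensor n (fun i => v i.succ)

/-!
Write `P S` for the product of the `a i`, `i ∈ S`, in increasing order of `i`. Primitivity gives
`Δ (P S) = ∑_{T ⊆ S} P T ⊗ P (S \ T)`, and with `δ^{n+1} = (e_H ⊗ δ^n) ∘ Δ` an induction on `n`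
shows that for `S.card ≤ n`, `δ^n (P S)` is the sum of `a (f 0) ⊗ ⋯ ⊗ a (f (n-1))` over the
injective `f : Fin n → ι` with range `S`: such an `f` is a first element `p ∈ S` followed by an
enumeration of `S \ {p}`. For `S = Fin n` these enumerations are the permutations.
-/

section Coalgebra

variable [Coalgebra R H]

local notation "Δ" => Coalgebra.comul (R := R) (A := H)
local notation "ε" => Coalgebra.counit (R := R) (A := H)

lemma assoc_comp_rTensor_comul_comp_lTensor {M : Type*} [AddCommGroup M] [Module R M]
    (f : H →ₗ[R] M) :
    (TensorProduct.assoc R H H M).toLinearMap ∘ₗ LinearMap.rTensor M Δ ∘ₗ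
        LinearMap.lTensor H f ∘ₗ Δ =
      LinearMap.lTensor H (LinearMap.lTensor H f ∘ₗ Δ) ∘ₗ Δ := by
  have hmap : LinearMap.rTensor M Δ ∘ₗ LinearMap.lTensor H f =
      LinearMap.lTensor (H ⊗[R] H) f ∘ₗ LinearMap.rTensor H Δ := by
    rw [LinearMap.rTensor_comp_lTensor, LinearMap.lTensor_comp_rTensor]
  have hassoc : (TensorProduct.assoc R H H M).toLinearMap ∘ₗ LinearMap.lTensor (H ⊗[R] H) f =
      LinearMap.lTensor H (LinearMap.lTensor H f) ∘ₗ (TensorProduct.assoc R H H H).toLinearMap :=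
    TensorProduct.ext <| TensorProduct.ext rfl
  calc _ = (TensorProduct.assoc R H H M).toLinearMap ∘ₗ
          (LinearMap.rTensor M Δ ∘ₗ LinearMap.lTensor H f) ∘ₗ Δ := rfl
    _ = ((TensorProduct.assoc R H H M).toLinearMap ∘ₗ LinearMap.lTensor (H ⊗[R] H) f) ∘ₗ
          LinearMap.rTensor H Δ ∘ₗ Δ := by rw [hmap]; rfl
    _ = LinearMap.lTensor H (LinearMap.lTensor H f) ∘ₗ
          (TensorProduct.assoc R H H H).toLinearMap ∘ₗ LinearMap.rTensor H Δ ∘ₗ Δ := by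
        rw [hassoc]; rfl
    _ = _ := by rw [Coalgebra.coassoc, ← LinearMap.comp_assoc, ← LinearMap.lTensor_comp]

lemma iterComul_succ (n : ℕ) :
    iterComul Δ ε (n + 1) = LinearMap.lTensor H (iterComul Δ ε n) ∘ₗ Δ := by
  induction n with
  | zero => exact (Coalgebra.lTensor_counit_comp_comul (R := R) (A := H)).symm
  | succ n ih =>
    have h := assoc_comp_rTensor_comul_comp_lTensor (iterComul Δ ε n)
    rw [← ih] at h
    exact h

lemma deltaPow_succ_apply (u x : H) (n : ℕ) :
    deltaPow Δ ε u (n + 1) x = TensorProduct.map (eAug ε u) (deltaPow Δ ε u n) (Δ x) := by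
  have h : deltaPow Δ ε u (n + 1) = TensorProduct.map (eAug ε u) (deltaPow Δ ε u n) ∘ₗ Δ := by
    show TensorProduct.map (eAug ε u) (mapPow (eAug ε u) n) ∘ₗ iterComul Δ ε (n + 1) = _
    rw [iterComul_succ, ← LinearMap.comp_assoc, LinearMap.lTensor, ← TensorProduct.map_comp,
      LinearMap.comp_id]
    rfl
  exact LinearMap.congr_fun h x

end Coalgebra

section OrderedProd

variable {ι M : Type*} [LinearOrder ι] [Monoid M]

def orderedProd (a : ι → M) (S : Finset ι) : M :=
  ((S.sort).map a).prod

@[simp]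
lemma orderedProd_empty (a : ι → M) : orderedProd a ∅ = 1 := by
  simp [orderedProd]

lemma orderedProd_insert_of_lt (a : ι → M) {S : Finset ι} {i : ι} (hi : ∀ x ∈ S, i < x) :
    orderedProd a (insert i S) = a i * orderedProd a S := by
  rw [orderedProd, Finset.sort_insert _ (fun x hx => (hi x hx).le) (fun h => lt_irrefl i (hi i h)),
    List.map_cons, List.prod_cons, orderedProd]

@[simp]
lemma orderedProd_singleton (a : ι → M) (i : ι) : orderedProd a {i} = a i := by
  simp [orderedProd]

lemma orderedProd_univ_fin {n : ℕ} (a : Fin n → M) :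
    orderedProd a Finset.univ = (List.ofFn a).prod := by
  rw [orderedProd, Fin.sort_univ, List.ofFn_eq_map]

end OrderedProd

structure IsPrimitiveElem (R : Type*) {A : Type*} [CommSemiring R] [Semiring A] [Bialgebra R A]
    (a : A) : Prop where
  counit_eq_zero : Coalgebra.counit (R := R) a = 0
  comul_eq : Coalgebra.comul (R := R) a = a ⊗ₜ[R] 1 + 1 ⊗ₜ[R] a

lemma Fin.cons_injective_and_range_eq_iff {ι : Type*} [DecidableEq ι] {n : ℕ} {p : ι}
    {g : Fin n → ι} {S : Finset ι} :
    (Function.Injective (Fin.cons p g : Fin (n + 1) → ι) ∧ Set.range (Fin.cons p g) = S) ↔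
      p ∈ S ∧ Function.Injective g ∧ Set.range g = S.erase p := by
  rw [Fin.cons_injective_iff, Fin.range_cons, Finset.coe_erase]
  constructor
  · rintro ⟨⟨hp, hg⟩, hS⟩
    refine ⟨by simp [← Finset.mem_coe, ← hS], hg, ?_⟩
    rw [← hS, Set.insert_sdiff_self_of_notMem hp]
  · rintro ⟨hp, hg, hS⟩
    refine ⟨⟨by simp [hS], hg⟩, ?_⟩
    rw [hS, Set.insert_sdiff_singleton, Set.insert_eq_of_mem (Finset.mem_coe.2 hp)]

open Classical in
def Finset.enumerations {ι : Type*} [Fintype ι] (S : Finset ι) (n : ℕ) : Finset (Fin n → ι) :=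
  {f | Function.Injective f ∧ Set.range f = S}

namespace Finset

variable {ι : Type*} [Fintype ι]

lemma mem_enumerations {S : Finset ι} {n : ℕ} {f : Fin n → ι} :
    f ∈ S.enumerations n ↔ Function.Injective f ∧ Set.range f = S := by
  simp [enumerations]

lemma card_eq_of_mem_enumerations {S : Finset ι} {n : ℕ} {f : Fin n → ι}
    (hf : f ∈ S.enumerations n) : S.card = n := by
  obtain ⟨hinj, hrange⟩ := mem_enumerations.1 hf
  rw [← Set.ncard_coe_finset, ← hrange, Set.ncard_range_of_injective hinj, Nat.card_eq_fintype_card,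
    Fintype.card_fin]

lemma sum_enumerations_succ [DecidableEq ι] {M : Type*} [AddCommMonoid M] (S : Finset ι) (n : ℕ)
    (F : (Fin (n + 1) → ι) → M) :
    ∑ f ∈ S.enumerations (n + 1), F f =
      ∑ p ∈ S, ∑ g ∈ (S.erase p).enumerations n, F (Fin.cons p g) := by
  rw [Finset.sum_sigma']
  refine Finset.sum_bij' (fun f _ => ⟨f 0, Fin.tail f⟩) (fun x _ => Fin.cons x.1 x.2) ?_ ?_ ?_ ?_ ?_
  · intro f hf
    rw [← Fin.cons_self_tail f, mem_enumerations, Fin.cons_injective_and_range_eq_iff] at hf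
    simpa [mem_enumerations] using hf
  · rintro ⟨p, g⟩ hx
    simp only [mem_sigma, mem_enumerations] at hx
    exact mem_enumerations.2 (Fin.cons_injective_and_range_eq_iff.2 ⟨hx.1, hx.2⟩)
  · intro f _
    exact Fin.cons_self_tail f
  · rintro ⟨p, g⟩ _
    simp
  · intro f _
    rw [Fin.cons_self_tail]

lemma sum_enumerations_univ {n : ℕ} {M : Type*} [AddCommMonoid M] (F : (Fin n → Fin n) → M) :
    ∑ f ∈ (univ : Finset (Fin n)).enumerations n, F f = ∑ σ : Equiv.Perm (Fin n), F σ := by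
  refine (Finset.sum_bij (fun (σ : Equiv.Perm (Fin n)) _ => ⇑σ)
    (fun σ _ => mem_enumerations.2 ⟨σ.injective, by simp [σ.surjective.range_eq]⟩)
    (fun σ _ τ _ h => Equiv.coe_fn_injective h) (fun f hf => ?_) (fun _ _ => rfl)).symm
  obtain ⟨hinj, hrange⟩ := mem_enumerations.1 hf
  exact ⟨Equiv.ofBijective f ⟨hinj, Set.range_eq_univ.1 (by simpa using hrange)⟩, mem_univ _, rfl⟩

end Finset

section Bialgebra

variable {k H : Type u} [CommRing k] [Ring H] [Bialgebra k H]

local notation "Δ" => Coalgebra.comul (R := k) (A := H)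
local notation "ε" => Coalgebra.counit (R := k) (A := H)

lemma comul_orderedProd {ι : Type*} [LinearOrder ι] {a : ι → H} (S : Finset ι)
    (ha : ∀ i ∈ S, IsPrimitiveElem k (a i)) :
    Δ (orderedProd a S) = ∑ T ∈ S.powerset, orderedProd a T ⊗ₜ[k] orderedProd a (S \ T) := by
  induction S using Finset.induction_on_min with
  | empty => simp [Algebra.TensorProduct.one_def]
  | insert i S hi ih =>
    have hiS : i ∉ S := fun h => lt_irrefl i (hi i h)
    rw [orderedProd_insert_of_lt a hi, Bialgebra.comul_mul,
      (ha i (Finset.mem_insert_self i S)).comul_eq,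
      ih (fun j hj => ha j (Finset.mem_insert_of_mem hj)), Finset.sum_powerset_insert hiS,
      add_comm, add_mul, Finset.mul_sum, Finset.mul_sum]
    congr 1 <;> refine Finset.sum_congr rfl fun T hT => ?_ <;> rw [Finset.mem_powerset] at hT
    · rw [Finset.insert_sdiff_of_notMem _ (fun h => hiS (hT h)),
        orderedProd_insert_of_lt a (fun x hx => hi x (Finset.sdiff_subset hx)),
        Algebra.TensorProduct.tmul_mul_tmul, one_mul]
    · rw [Finset.insert_sdiff_insert, Finset.sdiff_insert_of_notMem hiS,
        orderedProd_insert_of_lt a (fun x hx => hi x (hT hx)), Algebra.TensorProduct.tmul_mul_tmul,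
        one_mul]

lemma eAug_one_self : eAug ε (1 : H) 1 = 0 := by
  simp [eAug]

lemma eAug_one_of_counit_eq_zero {x : H} (hx : ε x = 0) : eAug ε (1 : H) x = x := by
  simp [eAug, hx]

lemma deltaPow_succ_orderedProd {ι : Type*} [LinearOrder ι] {a : ι → H}
    (n : ℕ) (S : Finset ι) (ha : ∀ i ∈ S, IsPrimitiveElem k (a i))
    (hsmall : ∀ T ⊆ S, 2 ≤ T.card → deltaPow Δ ε (1 : H) n (orderedProd a (S \ T)) = 0) :
    deltaPow Δ ε (1 : H) (n + 1) (orderedProd a S) =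
      ∑ p ∈ S, a p ⊗ₜ[k] deltaPow Δ ε 1 n (orderedProd a (S.erase p)) := by
  rw [deltaPow_succ_apply, comul_orderedProd S ha, map_sum]
  -- Only singletons `T` contribute: `e_H 1 = 0`, and `hsmall` kills the rest.
  rw [← Finset.sum_subset (fun T hT => Finset.mem_powerset.2 (Finset.mem_powersetCard.1 hT).1)]
  · rw [Finset.powersetCard_one, Finset.sum_map]
    refine Finset.sum_congr rfl fun p hp => ?_
    simp only [Function.Embedding.coeFn_mk, TensorProduct.map_tmul, orderedProd_singleton,
      eAug_one_of_counit_eq_zero (ha p hp).counit_eq_zero, Finset.sdiff_singleton_eq_erase]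
    rfl
  · intro T hT hT1
    rw [Finset.mem_powerset] at hT
    rw [Finset.mem_powersetCard, not_and] at hT1
    rw [TensorProduct.map_tmul]
    rcases Nat.lt_or_gt_of_ne (hT1 hT) with h0 | h2
    · rw [Finset.card_eq_zero.1 (Nat.lt_one_iff.1 h0), orderedProd_empty, eAug_one_self,
        TensorProduct.zero_tmul]
    · rw [hsmall T hT h2, TensorProduct.tmul_zero]

theorem deltaPow_orderedProd {ι : Type*} [LinearOrder ι] [Fintype ι] {a : ι → H}
    (ha : ∀ i, IsPrimitiveElem k (a i)) (n : ℕ) (S : Finset ι) (hS : S.card ≤ n) :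
    deltaPow Δ ε (1 : H) n (orderedProd a S) = ∑ f ∈ S.enumerations n, mkTensor n (a ∘ f) := by
  induction n generalizing S with
  | zero =>
    obtain rfl : S = ∅ := Finset.card_eq_zero.1 (Nat.le_zero.1 hS)
    have hmem : (default : Fin 0 → ι) ∈ (∅ : Finset ι).enumerations 0 :=
      Finset.mem_enumerations.2 ⟨Function.injective_of_subsingleton _, by simp⟩
    rw [Finset.sum_eq_single_of_mem _ hmem (fun f _ hf => absurd (Subsingleton.elim f _) hf),
      orderedProd_empty]
    exact Bialgebra.counit_one (R := k) (A := H)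
  | succ n ih =>
    have hsmall : ∀ T ⊆ S, 2 ≤ T.card → deltaPow Δ ε (1 : H) n (orderedProd a (S \ T)) = 0 := by
      intro T hT hT2
      have hcard : (S \ T).card < n := by
        rw [Finset.card_sdiff_of_subset hT]; have := Finset.card_le_card hT; omega
      rw [ih _ hcard.le, Finset.sum_eq_zero]
      exact fun f hf => absurd (Finset.card_eq_of_mem_enumerations hf) hcard.ne
    rw [Finset.sum_enumerations_succ, deltaPow_succ_orderedProd n S (fun i _ => ha i) hsmall]
    refine Finset.sum_congr rfl fun p hp => ?_
    rw [ih _ (by rw [Finset.card_erase_of_mem hp]; omega), TensorProduct.tmul_sum]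
    rfl

end Bialgebra

theorem stmt9_general {k : Type u} [Field k] {H : Type u} [Ring H] [Bialgebra k H]
    (n : ℕ) (a : Fin n → H)
    (hprim : ∀ i, Coalgebra.counit (R := k) (A := H) (a i) = 0 ∧
      Coalgebra.comul (R := k) (A := H) (a i) = a i ⊗ₜ[k] 1 + 1 ⊗ₜ[k] a i) :
    deltaPow (Coalgebra.comul (R := k) (A := H)) (Coalgebra.counit (R := k) (A := H))
        (1 : H) n ((List.ofFn a).prod)
      = ∑ σ : Equiv.Perm (Fin n), mkTensor n (fun i => a (σ i)) := by
  rw [← orderedProd_univ_fin, deltaPow_orderedProd (fun i => ⟨(hprim i).1, (hprim i).2⟩) n _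
    (by simp), Finset.sum_enumerations_univ]
  rfl

/-- For primitive elements `a 0, …, a (n-1)` of a bialgebra `H` over a field,
`δ^n (a 0 ⋯ a (n-1)) = ∑_{σ ∈ S_n} a (σ 0) ⊗ ⋯ ⊗ a (σ (n-1))`. -/
theorem stmt9 {k : Type u} [Field k] {H : Type u} [Ring H] [Bialgebra k H]
    (n : ℕ) (hn : 1 ≤ n) (a : Fin n → H)
    (hprim : ∀ i, Coalgebra.counit (R := k) (A := H) (a i) = 0 ∧
      Coalgebra.comul (R := k) (A := H) (a i) = a i ⊗ₜ[k] 1 + 1 ⊗ₜ[k] a i) :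
    deltaPow (Coalgebra.comul (R := k) (A := H)) (Coalgebra.counit (R := k) (A := H))
        (1 : H) n ((List.ofFn a).prod)
      = ∑ σ : Equiv.Perm (Fin n), mkTensor n (fun i => a (σ i)) :=
  stmt9_general n a hprim
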